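/- arXiv:2403.12652 — 4 statements merged into one kernel-verified Lean document; each statement's English description precedes it below -/
import Mathlib

section
/- Let f : 𝕋 → ℝ be a C¹ function on the one-dimensional torus that is positive and bounded away from 0, and let β ∈ (-1/2, 1) and ϑ > 2. Then sup_{x∈𝕋} f(x)^{β-ϑ} ≤ ((β-ϑ)²/2) ∫_𝕋 f^{β-ϑ-2} (f')² dx + 2 (∫_𝕋 f dx)^{β-ϑ}. -/
/-!
Put `γ = β - ϑ` and `g = f ^ γ`. Walking around the circle from `x` to any `z` and back shows
`2 (g x - g z) ≤ ∫ |g'|` for a periodic `C¹` function. Take `z` where `f` equals its mean (mean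
value theorem for integrals), so that `g z = (∫ f) ^ γ`. By AM-GM,
`|g'| = |γ f' f ^ (γ - 1)| ≤ (γ² / 2) f ^ (γ - 2) f'² + g / 2`, hence
`g ≤ (∫ f) ^ γ + (γ² / 4) ∫ f ^ (γ - 2) f'² + (∫ g) / 4` pointwise. Integrating this bound
controls `∫ g`, and the claim follows with the better constants `γ² / 3` and `4 / 3`.
-/

open Real MeasureTheory Set

theorem abs_sub_le_integral_abs_deriv {g : ℝ → ℝ} (hg : ContDiff ℝ 1 g) {a b : ℝ} (hab : a ≤ b) :
    |g b - g a| ≤ ∫ t in a..b, |deriv g t| := by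
  rw [← intervalIntegral.integral_deriv_eq_sub (fun x _ => hg.differentiable one_ne_zero x)
    ((hg.continuous_deriv le_rfl).intervalIntegrable a b)]
  exact intervalIntegral.abs_integral_le_integral_abs hab

theorem Function.Periodic.sub_le_integral_abs_deriv_div_two {g : ℝ → ℝ} {T : ℝ}
    (hg : ContDiff ℝ 1 g) (hper : Function.Periodic g T) (hT : 0 < T) (x z : ℝ) :
    g x - g z ≤ (∫ t in 0..T, |deriv g t|) / 2 := by
  obtain ⟨y, ⟨hxy, hyx⟩, hzy⟩ := hper.exists_mem_Ico hT z x
  have hderiv : Function.Periodic (deriv g) T := fun t => by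
    rw [← deriv_comp_add_const]
    exact congrArg (deriv · t) (funext hper)
  have hint := (hg.continuous_deriv le_rfl).abs.intervalIntegrable (μ := volume)
  have hperiod : ∫ t in x..x + T, |deriv g t| = ∫ t in 0..T, |deriv g t| := by
    simpa using (hderiv.comp (|·|)).intervalIntegral_add_eq x 0
  have hsplit := intervalIntegral.integral_add_adjacent_intervals (hint x y) (hint y (x + T))
  have hleft := (abs_le.1 (abs_sub_le_integral_abs_deriv hg hxy)).1
  have hright := (abs_le.1 (abs_sub_le_integral_abs_deriv hg hyx.le)).2
  rw [hper x] at hright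
  linarith

theorem abs_mul_mul_rpow_sub_one_le {a : ℝ} (ha : 0 < a) (d γ : ℝ) :
    |d * γ * a ^ (γ - 1)| ≤ γ ^ 2 / 2 * (a ^ (γ - 2) * d ^ 2) + a ^ γ / 2 := by
  have hP := rpow_pos_of_pos ha γ
  have hlhs : |d * γ * a ^ (γ - 1)| = a ^ γ * |d * γ / a| := by
    rw [rpow_sub ha, rpow_one, abs_mul, abs_div, abs_div, abs_of_pos hP, abs_of_pos ha]
    ring
  have hrhs : γ ^ 2 / 2 * (a ^ (γ - 2) * d ^ 2) + a ^ γ / 2 = a ^ γ * ((d * γ / a) ^ 2 + 1) / 2 := by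
    rw [rpow_sub ha, rpow_two]
    field_simp
  rw [hlhs, hrhs]
  nlinarith [sq_nonneg (|d * γ / a| - 1), sq_abs (d * γ / a)]

theorem integral_abs_deriv_rpow_le {f : ℝ → ℝ} (hf : ContDiff ℝ 1 f) (hpos : ∀ x, 0 < f x)
    (γ : ℝ) {a b : ℝ} (hab : a ≤ b) :
    ∫ x in a..b, |deriv (fun y => f y ^ γ) x| ≤
      γ ^ 2 / 2 * (∫ x in a..b, f x ^ (γ - 2) * deriv f x ^ 2) + (∫ x in a..b, f x ^ γ) / 2 := by
  have hderiv : deriv (fun y => f y ^ γ) = fun x => deriv f x * γ * f x ^ (γ - 1) := funext fun x =>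
    ((hf.differentiable one_ne_zero x).hasDerivAt.rpow_const (Or.inl (hpos x).ne')).deriv
  have hrpow (p : ℝ) : Continuous fun x => f x ^ p :=
    hf.continuous.rpow_const fun x => Or.inl (hpos x).ne'
  rw [hderiv, ← intervalIntegral.integral_const_mul, ← intervalIntegral.integral_div,
    ← intervalIntegral.integral_add ((by fun_prop : Continuous _).intervalIntegrable _ _)
      ((by fun_prop : Continuous _).intervalIntegrable _ _)]
  refine intervalIntegral.integral_mono_on hab ((by fun_prop : Continuous _).intervalIntegrable _ _)
    ((by fun_prop : Continuous _).intervalIntegrable _ _) fun x _ => ?_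
  exact abs_mul_mul_rpow_sub_one_le (hpos x) _ _

theorem stmt0_general (β ϑ : ℝ)
    (f : ℝ → ℝ) (hf : ContDiff ℝ 1 f) (hper : Function.Periodic f 1)
    (hpos : ∃ c > 0, ∀ x, c ≤ f x) :
    ∀ x : ℝ, f x ^ (β - ϑ) ≤
      ((β - ϑ) ^ 2 / 2) * (∫ x in (0:ℝ)..1, f x ^ (β - ϑ - 2) * (deriv f x) ^ 2)
        + 2 * (∫ x in (0:ℝ)..1, f x) ^ (β - ϑ) := by
  obtain ⟨c, hc, hcf⟩ := hpos
  have hfpos : ∀ x, 0 < f x := fun x => hc.trans_le (hcf x)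
  obtain ⟨z, -, hz⟩ := exists_eq_interval_average zero_ne_one hf.continuous.continuousOn
  rw [interval_average_eq_div, sub_zero, div_one] at hz
  set γ := β - ϑ
  set I := ∫ x in (0:ℝ)..1, f x ^ (γ - 2) * deriv f x ^ 2
  set J := ∫ x in (0:ℝ)..1, f x
  set K := ∫ x in (0:ℝ)..1, f x ^ γ
  have hg : ContDiff ℝ 1 fun x => f x ^ γ := hf.rpow_const_of_ne fun x => (hfpos x).ne'
  have hgper : Function.Periodic (fun x => f x ^ γ) 1 := fun x => by simp only [hper x]
  have hbound : ∀ x, f x ^ γ ≤ J ^ γ + γ ^ 2 / 4 * I + K / 4 := fun x => by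
    have hosc := hgper.sub_le_integral_abs_deriv_div_two hg one_pos x z
    rw [hz] at hosc
    linarith [integral_abs_deriv_rpow_le hf hfpos γ zero_le_one]
  have hK : K ≤ J ^ γ + γ ^ 2 / 4 * I + K / 4 := by
    simpa using intervalIntegral.integral_mono_on (μ := volume) zero_le_one
      (hg.continuous.intervalIntegrable 0 1) intervalIntegrable_const fun x _ => hbound x
  have hI : 0 ≤ I := intervalIntegral.integral_nonneg zero_le_one fun x _ =>
    mul_nonneg (rpow_pos_of_pos (hfpos x) _).le (sq_nonneg _)
  have hJ : 0 ≤ J ^ γ := rpow_nonneg (hz ▸ hfpos z).le γ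
  intro x
  linarith [hbound x, mul_nonneg (sq_nonneg γ) hI]

/-- for a positive C¹ function on the torus (represented as a 1-periodic
function on ℝ), `sup f^(β-ϑ) ≤ ((β-ϑ)²/2) ∫ f^(β-ϑ-2) (f')² + 2 (∫ f)^(β-ϑ)`. -/
theorem stmt0 (β ϑ : ℝ) (hβ : β ∈ Set.Ioo (-(1:ℝ)/2) 1) (hϑ : 2 < ϑ)
    (f : ℝ → ℝ) (hf : ContDiff ℝ 1 f) (hper : Function.Periodic f 1)
    (hpos : ∃ c > 0, ∀ x, c ≤ f x) :
    ∀ x : ℝ, f x ^ (β - ϑ) ≤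
      ((β - ϑ) ^ 2 / 2) * (∫ x in (0:ℝ)..1, f x ^ (β - ϑ - 2) * (deriv f x) ^ 2)
        + 2 * (∫ x in (0:ℝ)..1, f x) ^ (β - ϑ) :=
  stmt0_general β ϑ f hf hper hpos
end

section
/- Let f : 𝕋 → ℝ be a C¹ function on the one-dimensional torus that is positive and bounded away from 0, and let β ∈ (-1/2, 1). Then there is a constant C depending only on β such that sup_{x∈𝕋} f(x)^{β+5} ≤ C [ (∫_𝕋 f^{β-2} (f')⁴ dx) (∫_𝕋 f dx)³ + (∫_𝕋 f dx)^{β+5} ]. -/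
/-!
Put `θ = (β + 5) / 4`. Then `(f ^ θ)' = θ f ^ ((β + 1) / 4) f'`, and writing
`f ^ ((β + 1) / 4) |f'| = (f ^ ((β - 2) / 4) |f'|) · f ^ (3 / 4)`, Hölder's inequality with
exponents `4` and `4 / 3` bounds the total variation of `f ^ θ` over a period by
`θ A ^ (1/4) M ^ (3/4)`, where `A = ∫ f ^ (β - 2) f' ^ 4` and `M = ∫ f`. As `f` attains its mean
`M` somewhere, `sup f ^ θ ≤ M ^ θ + θ A ^ (1/4) M ^ (3/4)`, and raising this to the fourth power
with `(a + b) ^ 4 ≤ 8 (a ^ 4 + b ^ 4)` gives the claim with `C = 8 (1 + θ ^ 4)`.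
-/

open Real MeasureTheory Set

theorem ContinuousOn.memLp_restrict_of_isCompact {X : Type*} [TopologicalSpace X] [T2Space X]
    [MeasurableSpace X] [OpensMeasurableSpace X] {μ : Measure X} [IsFiniteMeasureOnCompacts μ]
    {s : Set X} {u : X → ℝ} (hs : IsCompact s) (hu : ContinuousOn u s) (p : ENNReal) :
    MemLp u p (μ.restrict s) := by
  have : IsFiniteMeasure (μ.restrict s) := isFiniteMeasure_restrict.2 hs.measure_lt_top.ne
  obtain ⟨C, hC⟩ := hs.exists_bound_of_continuousOn hu
  refine MemLp.of_bound (hu.aestronglyMeasurable hs.measurableSet) C ?_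
  filter_upwards [ae_restrict_mem hs.measurableSet] with t ht
  exact hC t ht

theorem intervalIntegral.integral_mul_le_Lp_mul_Lq_of_nonneg {a b p q : ℝ} (hab : a ≤ b)
    (hpq : p.HolderConjugate q) {u v : ℝ → ℝ} (hu : ContinuousOn u (Icc a b))
    (hv : ContinuousOn v (Icc a b)) (hu₀ : ∀ t ∈ Icc a b, 0 ≤ u t)
    (hv₀ : ∀ t ∈ Icc a b, 0 ≤ v t) :
    ∫ t in a..b, u t * v t ≤
      (∫ t in a..b, u t ^ p) ^ (1 / p) * (∫ t in a..b, v t ^ q) ^ (1 / q) := by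
  have hsub : volume.restrict (Ioc a b) ≤ volume.restrict (Icc a b) :=
    Measure.restrict_mono Ioc_subset_Icc_self le_rfl
  have nonneg {w : ℝ → ℝ} (hw : ∀ t ∈ Icc a b, 0 ≤ w t) : 0 ≤ᵐ[volume.restrict (Ioc a b)] w :=
    (ae_restrict_iff' measurableSet_Ioc).2 (ae_of_all _ fun t ht ↦ hw t (Ioc_subset_Icc_self ht))
  simp only [intervalIntegral.integral_of_le hab]
  exact MeasureTheory.integral_mul_le_Lp_mul_Lq_of_nonneg hpq (nonneg hu₀) (nonneg hv₀)
    ((hu.memLp_restrict_of_isCompact isCompact_Icc _).mono_measure hsub)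
    ((hv.memLp_restrict_of_isCompact isCompact_Icc _).mono_measure hsub)

theorem sub_le_integral_abs_of_hasDerivAt {g g' : ℝ → ℝ} {a b y z : ℝ}
    (hderiv : ∀ t ∈ Icc a b, HasDerivAt g (g' t) t) (hint : IntervalIntegrable g' volume a b)
    (hy : y ∈ Icc a b) (hz : z ∈ Icc a b) :
    g z - g y ≤ ∫ t in a..b, |g' t| := by
  have hab : a ≤ b := hy.1.trans hy.2
  have hyz : uIcc y z ⊆ Icc a b := by
    rw [← uIcc_of_le hab]; exact uIcc_subset_uIcc (Icc_subset_uIcc hy) (Icc_subset_uIcc hz)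
  have hftc : ∫ t in y..z, g' t = g z - g y :=
    intervalIntegral.integral_eq_sub_of_hasDerivAt (fun t ht ↦ hderiv t (hyz ht))
      (hint.mono_set (by rwa [uIcc_of_le hab]))
  calc g z - g y ≤ |∫ t in y..z, g' t| := hftc ▸ le_abs_self _
    _ ≤ ∫ t in uIoc y z, |g' t| := by
        simpa only [Real.norm_eq_abs] using
          intervalIntegral.norm_integral_le_integral_norm_uIoc (f := g') (μ := volume)
    _ ≤ ∫ t in Ioc a b, |g' t| :=
        setIntegral_mono_set ((intervalIntegrable_iff_integrableOn_Ioc_of_le hab).1 hint).abs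
          (ae_of_all _ fun t ↦ abs_nonneg _)
          (Ioc_subset_Ioc (le_min hy.1 hz.1) (max_le hy.2 hz.2)).eventuallyLE
    _ = ∫ t in a..b, |g' t| := (intervalIntegral.integral_of_le hab).symm

theorem integral_rpow_mul_abs_deriv_le_holder {f : ℝ → ℝ} (hf : ContDiff ℝ 1 f)
    (hpos : ∀ x, 0 < f x) (β : ℝ) {a b : ℝ} (hab : a ≤ b) :
    ∫ t in a..b, f t ^ ((β + 1) / 4) * |deriv f t| ≤
      (∫ t in a..b, f t ^ (β - 2) * deriv f t ^ 4) ^ (1 / 4 : ℝ) *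
        (∫ t in a..b, f t) ^ (3 / 4 : ℝ) := by
  have hfc : Continuous f := hf.continuous
  have hpow (r : ℝ) : Continuous fun t ↦ f t ^ r := hfc.rpow_const fun t ↦ Or.inl (hpos t).ne'
  have hpq : (4 : ℝ).HolderConjugate (4 / 3) := ⟨by norm_num, by norm_num, by norm_num⟩
  have h := intervalIntegral.integral_mul_le_Lp_mul_Lq_of_nonneg hab hpq
    (u := fun t ↦ f t ^ ((β - 2) / 4) * |deriv f t|) (v := fun t ↦ f t ^ (3 / 4 : ℝ))
    ((hpow ((β - 2) / 4)).mul hf.continuous_deriv_one.abs).continuousOn (hpow (3 / 4)).continuousOn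
    (fun t _ ↦ mul_nonneg (rpow_nonneg (hpos t).le _) (abs_nonneg _))
    (fun t _ ↦ rpow_nonneg (hpos t).le _)
  have hprod (t : ℝ) : f t ^ ((β - 2) / 4) * |deriv f t| * f t ^ (3 / 4 : ℝ) =
      f t ^ ((β + 1) / 4) * |deriv f t| := by
    rw [mul_right_comm, ← rpow_add (hpos t)]; ring_nf
  have hfourth (t : ℝ) : (f t ^ ((β - 2) / 4) * |deriv f t|) ^ (4 : ℝ) =
      f t ^ (β - 2) * deriv f t ^ 4 := by
    rw [mul_rpow (rpow_nonneg (hpos t).le _) (abs_nonneg _), ← rpow_mul (hpos t).le, rpow_ofNat,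
      pow_abs, abs_of_nonneg (by positivity : (0 : ℝ) ≤ deriv f t ^ 4)]
    ring_nf
  have hthreeQuarters (t : ℝ) : (f t ^ (3 / 4 : ℝ)) ^ (4 / 3 : ℝ) = f t := by
    rw [← rpow_mul (hpos t).le]; norm_num
  simp only [hprod, hfourth, hthreeQuarters] at h
  rwa [show (1 : ℝ) / (4 / 3) = 3 / 4 by norm_num] at h

theorem rpow_le_integral_rpow_add_holder {f : ℝ → ℝ} (hf : ContDiff ℝ 1 f)
    (hper : Function.Periodic f 1) (hpos : ∀ x, 0 < f x) {β : ℝ} (hβ : 0 ≤ β + 5) (x : ℝ) :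
    f x ^ ((β + 5) / 4) ≤ (∫ t in (0 : ℝ)..1, f t) ^ ((β + 5) / 4) +
      (β + 5) / 4 * ((∫ t in (0 : ℝ)..1, f t ^ (β - 2) * deriv f t ^ 4) ^ (1 / 4 : ℝ) *
        (∫ t in (0 : ℝ)..1, f t) ^ (3 / 4 : ℝ)) := by
  set θ := (β + 5) / 4
  have hθ : 0 ≤ θ := by positivity
  obtain ⟨y, hy, hyM⟩ := exists_eq_interval_average zero_ne_one hf.continuous.continuousOn
  rw [interval_average_eq_div, sub_zero, div_one] at hyM
  replace hy : y ∈ Icc (0 : ℝ) 1 := by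
    rw [uIoo_of_le zero_le_one] at hy; exact Ioo_subset_Icc_self hy
  obtain ⟨z, hz, hxz⟩ := hper.exists_mem_Ico₀ one_pos x
  have hderiv (t : ℝ) :
      HasDerivAt (fun s ↦ f s ^ θ) (deriv f t * θ * f t ^ (θ - 1)) t :=
    (hf.differentiable one_ne_zero t).hasDerivAt.rpow_const (Or.inl (hpos t).ne')
  have hcont : Continuous fun t ↦ deriv f t * θ * f t ^ (θ - 1) :=
    (hf.continuous_deriv_one.mul continuous_const).mul
      (hf.continuous.rpow_const fun t ↦ Or.inl (hpos t).ne')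
  have habs (t : ℝ) :
      |deriv f t * θ * f t ^ (θ - 1)| = θ * (f t ^ ((β + 1) / 4) * |deriv f t|) := by
    rw [abs_mul, abs_mul, abs_of_nonneg hθ, abs_of_pos (rpow_pos_of_pos (hpos t) _),
      show θ - 1 = (β + 1) / 4 by ring]
    ring
  calc f x ^ θ = f z ^ θ := by rw [hxz]
    _ ≤ f y ^ θ + ∫ t in (0 : ℝ)..1, |deriv f t * θ * f t ^ (θ - 1)| := by
      have := sub_le_integral_abs_of_hasDerivAt (fun t _ ↦ hderiv t)
        (hcont.intervalIntegrable 0 1) hy (Ico_subset_Icc_self hz)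
      linarith
    _ = f y ^ θ + θ * ∫ t in (0 : ℝ)..1, f t ^ ((β + 1) / 4) * |deriv f t| := by
      simp only [habs, intervalIntegral.integral_const_mul]
    _ ≤ _ := by
      rw [hyM]
      gcongr
      exact integral_rpow_mul_abs_deriv_le_holder hf hpos β zero_le_one

theorem rpow_le_of_rpow_div_four_le_add {s X A M : ℝ} (hX : 0 ≤ X) (hA : 0 ≤ A) (hM : 0 ≤ M)
    (h : X ^ (s / 4) ≤ M ^ (s / 4) + s / 4 * (A ^ (1 / 4 : ℝ) * M ^ (3 / 4 : ℝ))) :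
    X ^ s ≤ 8 * (1 + (s / 4) ^ 4) * (A * M ^ 3 + M ^ s) := by
  have hfourth {Y : ℝ} (hY : 0 ≤ Y) (r : ℝ) : (Y ^ (r / 4)) ^ 4 = Y ^ r := by
    rw [← rpow_natCast, ← rpow_mul hY]; norm_num
  have hAM : (A ^ (1 / 4 : ℝ) * M ^ (3 / 4 : ℝ)) ^ 4 = A * M ^ 3 := by
    rw [mul_pow, hfourth hA 1, hfourth hM 3, rpow_one, rpow_ofNat]
  have hAM₀ : 0 ≤ A * M ^ 3 := by positivity
  have hMs : 0 ≤ M ^ s := rpow_nonneg hM s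
  calc X ^ s = (X ^ (s / 4)) ^ 4 := (hfourth hX s).symm
    _ ≤ (M ^ (s / 4) + s / 4 * (A ^ (1 / 4 : ℝ) * M ^ (3 / 4 : ℝ))) ^ 4 :=
      pow_le_pow_left₀ (rpow_nonneg hX _) h 4
    _ ≤ 8 * (M ^ s + (s / 4) ^ 4 * (A * M ^ 3)) := by
      rw [← hfourth hM s, ← hAM, ← mul_pow]
      exact (even_two_mul 2).add_pow_le.trans_eq (by norm_num)
    _ ≤ 8 * (1 + (s / 4) ^ 4) * (A * M ^ 3 + M ^ s) := by
      nlinarith [mul_nonneg (pow_nonneg (sq_nonneg s) 2) hAM₀]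

/-- `sup f^(β+5) ≤ C [ (∫ f^(β-2) (f')⁴)(∫ f)³ + (∫ f)^(β+5) ]` with `C = C(β)`. -/
theorem stmt1 (β : ℝ) (hβ : β ∈ Set.Ioo (-(1:ℝ)/2) 1) :
    ∃ C > (0:ℝ), ∀ f : ℝ → ℝ, ContDiff ℝ 1 f → Function.Periodic f 1 →
      (∃ c > 0, ∀ x, c ≤ f x) →
      ∀ x : ℝ, f x ^ (β + 5) ≤
        C * ((∫ x in (0:ℝ)..1, f x ^ (β - 2) * (deriv f x) ^ 4) * (∫ x in (0:ℝ)..1, f x) ^ 3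
          + (∫ x in (0:ℝ)..1, f x) ^ (β + 5)) := by
  refine ⟨8 * (1 + ((β + 5) / 4) ^ 4), by positivity, fun f hf hper ⟨c, hc, hcf⟩ x ↦ ?_⟩
  have hpos (t : ℝ) : 0 < f t := hc.trans_le (hcf t)
  have hM : 0 ≤ ∫ t in (0 : ℝ)..1, f t :=
    intervalIntegral.integral_nonneg zero_le_one fun t _ ↦ (hpos t).le
  have hA : 0 ≤ ∫ t in (0 : ℝ)..1, f t ^ (β - 2) * deriv f t ^ 4 :=
    intervalIntegral.integral_nonneg zero_le_one fun t _ ↦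
      mul_nonneg (rpow_nonneg (hpos t).le _) (by positivity)
  exact rpow_le_of_rpow_div_four_le_add (hpos x).le hA hM
    (rpow_le_integral_rpow_add_holder hf hper hpos (by linarith [hβ.1]) x)
end

section
/- Let f : 𝕋 → ℝ be a C¹ function on the torus, positive and bounded away from 0. Define E(f) = ∫_𝕋 [ (1/2)|f'|² + φ(f) ] dx with φ ≥ 0. Then there is a universal constant C such that sup_{x∈𝕋} f(x)³ ≤ C ( E(f) · ∫_𝕋 f dx + (∫_𝕋 f dx)³ ). -/
open MeasureTheory Set

/-! With `M` and `m` the maximum and minimum of `f` over a period, `m ≤ ∫ f`, and the fundamental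
theorem of calculus for `f³` gives `M³ - m³ ≤ ∫ 3 f² |f'|`. Since `f³ ≤ M³`, AM-GM gives
`f² |f'| ≤ (a f + M³ f'² / a) / 2` pointwise for every `a > 0`, so
`M³ - m³ ≤ 3/2 (a ∫ f + M³ ∫ f'² / a)`. The choice `a = 3 ∫ f'² + (∫ f)²` makes the last term at
most `M³ / 2`, leaving `M³ ≤ 5 (∫ f)³ + 9 ∫ f'² ∫ f`. -/

theorem abs_sub_le_integral_abs_deriv_s3 {g g' : ℝ → ℝ} {a b u v : ℝ}
    (hg : ∀ t ∈ Icc a b, HasDerivAt g (g' t) t) (hint : IntervalIntegrable g' volume a b)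
    (hu : u ∈ Icc a b) (hv : v ∈ Icc a b) :
    |g v - g u| ≤ ∫ t in a..b, |g' t| := by
  have hab : a ≤ b := hu.1.trans hu.2
  have huv : uIcc u v ⊆ uIcc a b :=
    uIcc_subset_uIcc (Icc_subset_uIcc hu) (Icc_subset_uIcc hv)
  rw [← intervalIntegral.integral_eq_sub_of_hasDerivAt
    (fun t ht => hg t (uIcc_of_le hab ▸ huv ht)) (hint.mono_set huv),
    intervalIntegral.integral_of_le hab]
  calc ‖∫ t in u..v, g' t‖ ≤ ∫ t in uIoc u v, ‖g' t‖ :=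
        intervalIntegral.norm_integral_le_integral_norm_uIoc
    _ ≤ ∫ t in Ioc a b, |g' t| :=
        setIntegral_mono_set ((intervalIntegrable_iff_integrableOn_Ioc_of_le hab).1 hint).norm
          (Filter.Eventually.of_forall fun t => norm_nonneg _)
          (uIoc_of_le hab ▸ uIoc_subset_uIoc_of_uIcc_subset_uIcc huv).eventuallyLE

theorem sq_mul_abs_le_of_le {a M u d : ℝ} (ha : 0 < a) (hu : 0 ≤ u) (huM : u ≤ M) :
    u ^ 2 * |d| ≤ (a * u + M ^ 3 / a * d ^ 2) / 2 := by
  have hcube : 0 ≤ M ^ 3 * d ^ 2 - u ^ 3 * d ^ 2 := sub_nonneg.2 (by gcongr)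
  have hsos : (a * u + M ^ 3 / a * d ^ 2) / 2 - u ^ 2 * |d|
      = (u * (a - u * |d|) ^ 2 + (M ^ 3 * d ^ 2 - u ^ 3 * d ^ 2)) / (2 * a) := by
    field_simp
    rw [← sq_abs d]
    ring
  rw [← sub_nonneg, hsos]
  positivity

theorem cube_sub_cube_le_integral {f : ℝ → ℝ} {p q a M u v : ℝ} (hf : ContDiff ℝ 1 f)
    (hf0 : ∀ t ∈ Icc p q, 0 ≤ f t) (hM : ∀ t ∈ Icc p q, f t ≤ M) (ha : 0 < a)
    (hu : u ∈ Icc p q) (hv : v ∈ Icc p q) :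
    f v ^ 3 - f u ^ 3 ≤
      3 / 2 * (a * ∫ t in p..q, f t) + 3 / 2 * (M ^ 3 / a * ∫ t in p..q, deriv f t ^ 2) := by
  have hpq : p ≤ q := hu.1.trans hu.2
  have hfc : Continuous f := hf.continuous
  have hf'c : Continuous (deriv f) := hf.continuous_deriv le_rfl
  have hderiv : ∀ t, HasDerivAt (fun s => f s ^ 3) (3 * f t ^ 2 * deriv f t) t := fun t => by
    simpa using ((hf.differentiable one_ne_zero) t).hasDerivAt.fun_pow 3
  calc f v ^ 3 - f u ^ 3 ≤ ∫ t in p..q, |3 * f t ^ 2 * deriv f t| :=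
        (le_abs_self _).trans <| abs_sub_le_integral_abs_deriv_s3 (fun t _ => hderiv t)
          (Continuous.intervalIntegrable (by fun_prop) _ _) hu hv
    _ ≤ ∫ t in p..q, (3 / 2 * (a * f t) + 3 / 2 * (M ^ 3 / a * deriv f t ^ 2)) := by
        refine intervalIntegral.integral_mono_on hpq
          (Continuous.intervalIntegrable (by fun_prop) _ _)
          (Continuous.intervalIntegrable (by fun_prop) _ _) fun t ht => ?_
        rw [abs_mul, abs_of_nonneg (by have := hf0 t ht; positivity)]
        linarith [sq_mul_abs_le_of_le (d := deriv f t) ha (hf0 t ht) (hM t ht)]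
    _ = _ := by
        rw [intervalIntegral.integral_add (Continuous.intervalIntegrable (by fun_prop) _ _)
          (Continuous.intervalIntegrable (by fun_prop) _ _)]
        simp only [intervalIntegral.integral_const_mul]

theorem pow_three_le_of_periodic {f : ℝ → ℝ} (hf : ContDiff ℝ 1 f) (hper : Function.Periodic f 1)
    (hpos : ∀ x, 0 < f x) (x : ℝ) :
    f x ^ 3 ≤ 5 * (∫ t in (0:ℝ)..1, f t) ^ 3
      + 9 * (∫ t in (0:ℝ)..1, deriv f t ^ 2) * ∫ t in (0:ℝ)..1, f t := by
  set I := ∫ t in (0:ℝ)..1, f t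
  set D := ∫ t in (0:ℝ)..1, deriv f t ^ 2
  have hfc : Continuous f := hf.continuous
  obtain ⟨x₀, hx₀, hmax⟩ :=
    isCompact_Icc.exists_isMaxOn (nonempty_Icc.2 zero_le_one) hfc.continuousOn
  obtain ⟨y, hy, hmin⟩ :=
    isCompact_Icc.exists_isMinOn (nonempty_Icc.2 zero_le_one) hfc.continuousOn
  have hyI : f y ≤ I := by
    simpa using intervalIntegral.integral_mono_on zero_le_one
      (intervalIntegrable_const (μ := volume)) (hfc.intervalIntegrable 0 1) fun t ht => hmin ht
  have hI : 0 < I := (hpos y).trans_le hyI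
  have hD : 0 ≤ D := intervalIntegral.integral_nonneg zero_le_one fun t _ => sq_nonneg _
  set M := f x₀
  have hM : 0 ≤ M ^ 3 := pow_nonneg (hpos x₀).le 3
  have hosc := cube_sub_cube_le_integral (a := 3 * D + I ^ 2) hf (fun t _ => (hpos t).le)
    (fun t ht => hmax ht) (by positivity) hy hx₀
  have hDa : M ^ 3 / (3 * D + I ^ 2) * D ≤ M ^ 3 / 3 := by
    rw [div_mul_eq_mul_div, div_le_div_iff₀ (by positivity) three_pos]
    nlinarith [mul_nonneg hM (sq_nonneg I)]
  have hy3 : f y ^ 3 ≤ I ^ 3 := pow_le_pow_left₀ (hpos y).le hyI 3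
  have hM3 : M ^ 3 ≤ 5 * I ^ 3 + 9 * D * I := by linarith
  obtain ⟨x', hx', hxx'⟩ := hper.exists_mem_Ico₀ one_pos x
  rw [hxx']
  exact (pow_le_pow_left₀ (hpos x').le (hmax (Ico_subset_Icc_self hx')) 3).trans hM3

/-- `sup f³ ≤ C ( E(f) ∫ f + (∫ f)³ )` with a universal constant `C`, where
`E(f) = (1/2)∫ |f'|² + ∫ φ(f)` for any nonnegative potential `φ`. -/
theorem stmt3 :
    ∃ C > (0:ℝ), ∀ φ : ℝ → ℝ, (∀ r > 0, 0 ≤ φ r) →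
      ∀ f : ℝ → ℝ, ContDiff ℝ 1 f → Function.Periodic f 1 →
        (∃ c > 0, ∀ x, c ≤ f x) →
        ∀ x : ℝ, f x ^ 3 ≤
          C * (((1/2) * (∫ x in (0:ℝ)..1, (deriv f x) ^ 2) + (∫ x in (0:ℝ)..1, φ (f x)))
              * (∫ x in (0:ℝ)..1, f x)
            + (∫ x in (0:ℝ)..1, f x) ^ 3) := by
  refine ⟨18, by norm_num, fun φ hφ f hf hper ⟨c, hc, hcf⟩ x => ?_⟩
  have hpos : ∀ t, 0 < f t := fun t => hc.trans_le (hcf t)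
  have hI : 0 ≤ ∫ t in (0:ℝ)..1, f t :=
    intervalIntegral.integral_nonneg zero_le_one fun t _ => (hpos t).le
  have hΦ : 0 ≤ ∫ t in (0:ℝ)..1, φ (f t) :=
    intervalIntegral.integral_nonneg zero_le_one fun t _ => hφ _ (hpos t)
  have := pow_three_le_of_periodic hf hper hpos x
  linarith [mul_nonneg hΦ hI, pow_nonneg hI 3]
end

section
/- Let g : 𝕋 → ℝ be a C¹ function on the torus with ∫_𝕋 g dx = 0, and let β ∈ (-1/2, 1). Then there is a constant C depending only on β such that sup_{x∈𝕋} |g(x)|^{(β+5)/(β+2)} ≤ C (∫_𝕋 |g'|⁴ dx)^{1/4} (∫_𝕋 |g|^{4/(β+2)} dx)^{3/4}. -/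
open Real MeasureTheory Set

/-! Since `g` has zero mean over a period, it vanishes at some `c ∈ [x - 1, x]`. The fundamental
theorem of calculus for `|g|^p`, `p = (β+5)/(β+2) > 1`, between `c` and `x` gives
`|g x|^p ≤ p ∫₀¹ |g'| |g|^(p-1)`, and Hölder's inequality with exponents `4` and `4/3`
finishes, because `(p - 1) · 4/3 = 4/(β+2)`. -/

lemma abs_rpow_sub_two_mul_abs {p : ℝ} (hp : p ≠ 1) (y : ℝ) :
    |y| ^ (p - 2) * |y| = |y| ^ (p - 1) := by
  rcases eq_or_ne y 0 with rfl | hy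
  · simp [zero_rpow (sub_ne_zero.2 hp)]
  · rw [← rpow_add_one (abs_ne_zero.2 hy)]
    ring_nf

lemma norm_deriv_abs_rpow_comp {g : ℝ → ℝ} {p t : ℝ} (hp : 1 < p)
    (hg : DifferentiableAt ℝ g t) :
    ‖deriv (fun s ↦ |g s| ^ p) t‖ = p * (|deriv g t| * |g t| ^ (p - 1)) := by
  have hderiv : HasDerivAt (fun s ↦ |g s| ^ p) (p * |g t| ^ (p - 2) * g t * deriv g t) t :=
    (hasDerivAt_abs_rpow (g t) hp).comp t hg.hasDerivAt
  rw [hderiv.deriv, norm_eq_abs, abs_mul, abs_mul,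
    abs_mul, abs_of_pos (zero_lt_one.trans hp), abs_of_nonneg (by positivity),
    ← abs_rpow_sub_two_mul_abs hp.ne']
  ring

theorem abs_rpow_le_mul_integral_of_eq_zero {g : ℝ → ℝ} {p a b : ℝ} (hg : ContDiff ℝ 1 g)
    (hp : 1 < p) (hab : a ≤ b) (ha : g a = 0) :
    |g b| ^ p ≤ p * ∫ t in a..b, |deriv g t| * |g t| ^ (p - 1) := by
  have hgd : Differentiable ℝ g := hg.differentiable one_ne_zero
  have hdiff : Differentiable ℝ fun s ↦ |g s| ^ p := by simpa using hgd.norm_rpow hp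
  have hB : Continuous fun t ↦ p * (|deriv g t| * |g t| ^ (p - 1)) := by
    have := hg.continuous_deriv le_rfl
    fun_prop (discharger := linarith)
  have := norm_sub_le_integral_of_norm_deriv_le_of_le hab hdiff.continuous.continuousOn
    hdiff.differentiableOn (Filter.Eventually.of_forall fun t _ ↦
      (norm_deriv_abs_rpow_comp hp (hgd t)).le) (hB.intervalIntegrable a b)
  rwa [ha, abs_zero, zero_rpow (zero_lt_one.trans hp).ne', sub_zero, norm_eq_abs,
    abs_of_nonneg (by positivity), intervalIntegral.integral_const_mul] at this

theorem Function.Periodic.exists_mem_Icc_eq_zero {g : ℝ → ℝ} {T : ℝ}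
    (hper : Function.Periodic g T) (hT : 0 < T) (hg : Continuous g)
    (hmean : ∫ t in 0..T, g t = 0) (x : ℝ) :
    ∃ c ∈ Icc (x - T) x, g c = 0 := by
  obtain ⟨c, hc, hgc⟩ := exists_eq_interval_average (by linarith : x - T ≠ x) hg.continuousOn
  refine ⟨c, ?_, ?_⟩
  · rw [uIoo_of_le (by linarith)] at hc
    exact Ioo_subset_Icc_self hc
  · rw [hgc, interval_average_eq_div]
    simpa [hmean, hT.ne'] using hper.intervalIntegral_add_eq (x - T) 0

theorem Function.Periodic.intervalIntegral_le_of_nonneg {h : ℝ → ℝ} {T a b : ℝ}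
    (hper : Function.Periodic h T) (hh : Continuous h) (h0 : 0 ≤ h) (hab : a ≤ b)
    (hTa : b - T ≤ a) : ∫ t in a..b, h t ≤ ∫ t in 0..T, h t := by
  calc ∫ t in a..b, h t ≤ ∫ t in (b - T)..b, h t :=
        intervalIntegral.integral_mono_interval hTa hab le_rfl
          (Filter.Eventually.of_forall h0) (hh.intervalIntegrable _ _)
    _ = ∫ t in 0..T, h t := by simpa using hper.intervalIntegral_add_eq (b - T) 0

theorem Function.Periodic.abs_rpow_le_mul_integral {g : ℝ → ℝ} {T p : ℝ}
    (hg : ContDiff ℝ 1 g) (hper : Function.Periodic g T) (hT : 0 < T)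
    (hmean : ∫ t in 0..T, g t = 0) (hp : 1 < p) (x : ℝ) :
    |g x| ^ p ≤ p * ∫ t in 0..T, |deriv g t| * |g t| ^ (p - 1) := by
  obtain ⟨c, hc, hgc⟩ := hper.exists_mem_Icc_eq_zero hT hg.continuous hmean x
  have hcont : Continuous fun t ↦ |deriv g t| * |g t| ^ (p - 1) := by
    have := hg.continuous_deriv le_rfl
    fun_prop (discharger := linarith)
  have hperiodic : Function.Periodic (fun t ↦ |deriv g t| * |g t| ^ (p - 1)) T := fun t ↦ by
    have hderiv : deriv g (t + T) = deriv g t := by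
      rw [← deriv_comp_add_const, funext hper]
    simp only [hderiv, hper t]
  calc |g x| ^ p ≤ p * ∫ t in c..x, |deriv g t| * |g t| ^ (p - 1) :=
        abs_rpow_le_mul_integral_of_eq_zero hg hp hc.2 hgc
    _ ≤ p * ∫ t in 0..T, |deriv g t| * |g t| ^ (p - 1) := by
        gcongr
        exact hperiodic.intervalIntegral_le_of_nonneg hcont (fun t ↦ by positivity) hc.2
          (by linarith [hc.1])

theorem intervalIntegral_abs_mul_le_Lp_mul_Lq {f g : ℝ → ℝ} {a b p q : ℝ}
    (hpq : p.HolderConjugate q) (hab : a ≤ b) (hf : Continuous f) (hg : Continuous g) :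
    ∫ t in a..b, |f t| * |g t| ≤
      (∫ t in a..b, |f t| ^ p) ^ (1 / p) * (∫ t in a..b, |g t| ^ q) ^ (1 / q) := by
  simp only [intervalIntegral.integral_of_le hab]
  have hmemLp {h : ℝ → ℝ} (hh : Continuous h) (r) :
      MemLp (fun t ↦ |h t|) r (volume.restrict (Ioc a b)) := by
    obtain ⟨C, hC⟩ := (isCompact_Icc (a := a) (b := b)).exists_bound_of_continuousOn
      hh.abs.continuousOn
    exact .of_bound hh.abs.aestronglyMeasurable C
      ((ae_restrict_mem measurableSet_Ioc).mono fun t ht ↦ hC t (Ioc_subset_Icc_self ht))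
  exact integral_mul_le_Lp_mul_Lq_of_nonneg hpq (.of_forall fun _ ↦ abs_nonneg _)
    (.of_forall fun _ ↦ abs_nonneg _) (hmemLp hf _) (hmemLp hg _)

/-- for mean-free C¹ functions on the torus,
`sup |g|^((β+5)/(β+2)) ≤ C (∫ |g'|⁴)^(1/4) (∫ |g|^(4/(β+2)))^(3/4)`. -/
theorem stmt4 (β : ℝ) (hβ : β ∈ Set.Ioo (-(1:ℝ)/2) 1) :
    ∃ C > (0:ℝ), ∀ g : ℝ → ℝ, ContDiff ℝ 1 g → Function.Periodic g 1 →
      (∫ x in (0:ℝ)..1, g x) = 0 →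
      ∀ x : ℝ, |g x| ^ ((β + 5)/(β + 2)) ≤
        C * (∫ x in (0:ℝ)..1, |deriv g x| ^ 4) ^ ((1:ℝ)/4) *
          (∫ x in (0:ℝ)..1, |g x| ^ ((4:ℝ)/(β + 2))) ^ ((3:ℝ)/4) := by
  have hβ2 : 0 < β + 2 := by linarith [hβ.1]
  have hp : 1 < (β + 5) / (β + 2) := by rw [one_lt_div hβ2]; linarith
  have hq : (β + 5) / (β + 2) - 1 = 3 / (β + 2) := by field_simp; ring
  have hconj : (4 : ℝ).HolderConjugate (4 / 3) := ⟨by norm_num, by norm_num, by norm_num⟩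
  refine ⟨(β + 5) / (β + 2), zero_lt_one.trans hp, fun g hg hper hmean x ↦ ?_⟩
  have hgq : Continuous fun t ↦ |g t| ^ (3 / (β + 2)) :=
    hg.continuous.abs.rpow_const fun _ ↦ Or.inr (by positivity)
  have hpow (t : ℝ) :
      (|g t| ^ (3 / (β + 2))) ^ ((4:ℝ) / 3) = |g t| ^ ((4:ℝ) / (β + 2)) := by
    rw [← rpow_mul (abs_nonneg _)]
    field_simp
  have holder := intervalIntegral_abs_mul_le_Lp_mul_Lq hconj zero_le_one
    (hg.continuous_deriv le_rfl) hgq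
  simp only [abs_abs, abs_rpow_of_nonneg (abs_nonneg _), rpow_ofNat, hpow] at holder
  rw [show (1:ℝ) / (4 / 3) = 3 / 4 by norm_num] at holder
  calc |g x| ^ ((β + 5) / (β + 2))
      ≤ (β + 5) / (β + 2) * ∫ t in (0:ℝ)..1, |deriv g t| * |g t| ^ (3 / (β + 2)) := by
        rw [← hq]
        exact hper.abs_rpow_le_mul_integral hg one_pos hmean hp x
    _ ≤ (β + 5) / (β + 2) * ((∫ t in (0:ℝ)..1, |deriv g t| ^ 4) ^ ((1:ℝ) / 4) *
          (∫ t in (0:ℝ)..1, |g t| ^ ((4:ℝ) / (β + 2))) ^ ((3:ℝ) / 4)) := by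
        gcongr
    _ = _ := by ring
end
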